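/- Let 0 < α < β < ∞ and let b̄ : ℝ → ℝ be continuous, nonnegative, with b̄(a) = 0 for a ∉ [α,β]; set r = ∫_α^β b̄(c) dc. Let B : [0,∞) → ℝ be nonnegative and satisfy B(t) = ∫_α^β b̄(c)·B(t−c) dc for all t ≥ β. (i) If r > 1 and there is c₁ > 0 with B(s) ≥ c₁ for all s ∈ [0,β], then B(t) → ∞ as t → ∞. (ii) If r < 1 and B is bounded on [0,β], then B(t) → 0 as t → ∞. Consequently, for every a ∈ [0,β], n(a,t) = π(a)·B(t−a) tends to ∞ in case (i) and to 0 in case (ii) as t → ∞. -/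

import Mathlib

open MeasureTheory Real Set Filter

/-!
For `t ≥ β` the value `B(t)` is a `b̄`-weighted integral of `B` over the window `[t - β, t - α]`,
so a lower bound `m` on the window gives the lower bound `m · r` at `t`. Stepping by `α` from
`[0, β]` propagates `B ≥ c₁` to all of `[0, ∞)` when `r ≥ 1`, and stepping by `β` then gives
`B(t) ≥ c₁ rⁿ` for `t ≥ nβ`. Since the equation is linear, `-B` solves it too, and the same
argument applied to `-B` gives `B(t) ≤ c₂ rⁿ` when `r ≤ 1`.
-/

def IsRenewalSolution (α β : ℝ) (bbar B : ℝ → ℝ) : Prop :=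
  ContinuousOn B (Ici 0) ∧ ∀ t, β ≤ t → B t = ∫ c in α..β, bbar c * B (t - c)

theorem forall_nonneg_of_forall_Icc_of_window {α β : ℝ} (hα : 0 < α) (hβ : 0 ≤ β) {P : ℝ → Prop}
    (hinit : ∀ s ∈ Icc 0 β, P s)
    (hstep : ∀ t, β ≤ t → (∀ u ∈ Icc (t - β) (t - α), P u) → P t) {s : ℝ} (hs : 0 ≤ s) :
    P s := by
  have hlayer : ∀ n : ℕ, ∀ s ∈ Icc 0 (β + n * α), P s := by
    intro n
    induction n with
    | zero => simpa using hinit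
    | succ n ih =>
      intro s hs
      by_cases hsn : s ≤ β + n * α
      · exact ih s ⟨hs.1, hsn⟩
      · have : 0 ≤ (n : ℝ) * α := by positivity
        push_cast at hs
        exact hstep s (by linarith) fun u hu =>
          ih u ⟨by linarith [hu.1], by linarith [hu.2, hs.2]⟩
  obtain ⟨n, hn⟩ := exists_nat_ge (s / α)
  exact hlayer n s ⟨hs, by rw [div_le_iff₀ hα] at hn; linarith⟩

namespace IsRenewalSolution

variable {α β : ℝ} {bbar B : ℝ → ℝ}

theorem neg (h : IsRenewalSolution α β bbar B) : IsRenewalSolution α β bbar (-B) :=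
  ⟨h.1.neg, fun t ht => by simp only [Pi.neg_apply, mul_neg, intervalIntegral.integral_neg, h.2 t ht]⟩

theorem mul_integral_le (h : IsRenewalSolution α β bbar B) (hαβ : α ≤ β)
    (hbc : ContinuousOn bbar (Icc α β)) (hb0 : ∀ a ∈ Icc α β, 0 ≤ bbar a) {m t : ℝ}
    (ht : β ≤ t) (hm : ∀ u ∈ Icc (t - β) (t - α), m ≤ B u) :
    m * ∫ c in α..β, bbar c ≤ B t := by
  have hshift : ContinuousOn (fun c => B (t - c)) (Icc α β) :=
    h.1.comp (continuousOn_const.sub continuousOn_id) fun c hc => by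
      simp only [mem_Ici]; linarith [hc.2]
  rw [h.2 t ht, ← intervalIntegral.integral_const_mul]
  refine intervalIntegral.integral_mono_on hαβ
    ((continuousOn_const.mul hbc).intervalIntegrable_of_Icc hαβ)
    ((hbc.mul hshift).intervalIntegrable_of_Icc hαβ) fun c hc => ?_
  rw [mul_comm]
  exact mul_le_mul_of_nonneg_left (hm _ ⟨by linarith [hc.2], by linarith [hc.1]⟩) (hb0 c hc)

theorem le_of_forall_Icc_le (h : IsRenewalSolution α β bbar B) (hα : 0 < α) (hαβ : α ≤ β)
    (hbc : ContinuousOn bbar (Icc α β)) (hb0 : ∀ a ∈ Icc α β, 0 ≤ bbar a) {m : ℝ}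
    (hm : m ≤ m * ∫ c in α..β, bbar c) (hinit : ∀ s ∈ Icc 0 β, m ≤ B s) {s : ℝ} (hs : 0 ≤ s) :
    m ≤ B s :=
  forall_nonneg_of_forall_Icc_of_window hα (hα.le.trans hαβ) hinit
    (fun _ ht hwin => hm.trans (h.mul_integral_le hαβ hbc hb0 ht hwin)) hs

theorem mul_pow_le (h : IsRenewalSolution α β bbar B) (hαβ : α ≤ β)
    (hbc : ContinuousOn bbar (Icc α β)) (hb0 : ∀ a ∈ Icc α β, 0 ≤ bbar a) (hβ : 0 ≤ β) {m : ℝ}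
    (hm : ∀ s, 0 ≤ s → m ≤ B s) (n : ℕ) {s : ℝ} (hs : n * β ≤ s) :
    m * (∫ c in α..β, bbar c) ^ n ≤ B s := by
  induction n generalizing s with
  | zero => simpa using hm s (by simpa using hs)
  | succ n ih =>
    push_cast at hs
    have : 0 ≤ (n : ℝ) * β := by positivity
    rw [pow_succ, ← mul_assoc]
    exact h.mul_integral_le hαβ hbc hb0 (by linarith) fun u hu => ih (by linarith [hu.1])

theorem mul_pow_floor_le (h : IsRenewalSolution α β bbar B) (hαβ : α ≤ β)
    (hbc : ContinuousOn bbar (Icc α β)) (hb0 : ∀ a ∈ Icc α β, 0 ≤ bbar a) (hβ : 0 < β) {m : ℝ}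
    (hm : ∀ s, 0 ≤ s → m ≤ B s) {s : ℝ} (hs : 0 ≤ s) :
    m * (∫ c in α..β, bbar c) ^ ⌊s / β⌋₊ ≤ B s :=
  h.mul_pow_le hαβ hbc hb0 hβ.le hm _ <| by
    simpa only [le_div_iff₀ hβ] using Nat.floor_le (div_nonneg hs hβ.le)

theorem tendsto_atTop (h : IsRenewalSolution α β bbar B) (hα : 0 < α) (hαβ : α ≤ β)
    (hbc : ContinuousOn bbar (Icc α β)) (hb0 : ∀ a ∈ Icc α β, 0 ≤ bbar a)
    (hr : 1 < ∫ c in α..β, bbar c) {c₁ : ℝ} (hc₁ : 0 < c₁) (hinit : ∀ s ∈ Icc 0 β, c₁ ≤ B s) :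
    Tendsto B atTop atTop := by
  have hβ : 0 < β := hα.trans_le hαβ
  have hlow : ∀ s, 0 ≤ s → c₁ ≤ B s := fun s hs =>
    h.le_of_forall_Icc_le hα hαβ hbc hb0 (le_mul_of_one_le_right hc₁.le hr.le) hinit hs
  refine tendsto_atTop_mono' atTop ?_ <|
    ((tendsto_pow_atTop_atTop_of_one_lt hr).const_mul_atTop hc₁).comp
      (tendsto_nat_floor_atTop.comp (tendsto_id.atTop_div_const hβ))
  filter_upwards [eventually_ge_atTop 0] with s hs using
    h.mul_pow_floor_le hαβ hbc hb0 hβ hlow hs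

theorem tendsto_zero (h : IsRenewalSolution α β bbar B) (hα : 0 < α) (hαβ : α ≤ β)
    (hbc : ContinuousOn bbar (Icc α β)) (hb0 : ∀ a ∈ Icc α β, 0 ≤ bbar a)
    (hr : ∫ c in α..β, bbar c < 1) (hB0 : ∀ t, 0 ≤ t → 0 ≤ B t) {c₂ : ℝ}
    (hinit : ∀ s ∈ Icc 0 β, B s ≤ c₂) :
    Tendsto B atTop (nhds 0) := by
  have hβ : 0 < β := hα.trans_le hαβ
  have hr0 : 0 ≤ ∫ c in α..β, bbar c := intervalIntegral.integral_nonneg hαβ hb0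
  have hc₂ : 0 ≤ c₂ := (hB0 0 le_rfl).trans (hinit 0 ⟨le_rfl, hβ.le⟩)
  have hup : ∀ s, 0 ≤ s → -c₂ ≤ -B s := fun s hs =>
    h.neg.le_of_forall_Icc_le hα hαβ hbc hb0 (by nlinarith)
      (fun s hs => neg_le_neg (hinit s hs)) hs
  have hgeom : Tendsto (fun s => c₂ * (∫ c in α..β, bbar c) ^ ⌊s / β⌋₊) atTop (nhds 0) := by
    have := ((tendsto_pow_atTop_nhds_zero_of_lt_one hr0 hr).const_mul c₂).comp
      (tendsto_nat_floor_atTop.comp (tendsto_id.atTop_div_const hβ))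
    rwa [mul_zero] at this
  refine tendsto_of_tendsto_of_tendsto_of_le_of_le' tendsto_const_nhds hgeom ?_ ?_
  · filter_upwards [eventually_ge_atTop 0] with s hs using hB0 s hs
  · filter_upwards [eventually_ge_atTop 0] with s hs
    have := h.neg.mul_pow_floor_le hαβ hbc hb0 hβ hup hs
    simp only [Pi.neg_apply, neg_mul] at this
    linarith

end IsRenewalSolution

theorem renewal_blowup_or_extinction
    (α β : ℝ) (hα : 0 < α) (hαβ : α < β)
    (bbar : ℝ → ℝ) (hbc : Continuous bbar) (hb0 : ∀ a, 0 ≤ bbar a)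
    (r : ℝ) (hr : r = ∫ c in α..β, bbar c)
    (μ : ℝ → ℝ)
    (pi : ℝ → ℝ) (hpi : ∀ a, pi a = Real.exp (-(∫ s in (0:ℝ)..a, μ s)))
    (B : ℝ → ℝ) (hBcont : ContinuousOn B (Set.Ici 0))
    (hBnonneg : ∀ t : ℝ, 0 ≤ t → 0 ≤ B t)
    (hB : ∀ t : ℝ, β ≤ t → B t = ∫ c in α..β, bbar c * B (t - c)) :
    (1 < r → ∀ c₁ : ℝ, 0 < c₁ → (∀ s ∈ Set.Icc (0:ℝ) β, c₁ ≤ B s) →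
      Filter.Tendsto B Filter.atTop Filter.atTop ∧
      ∀ a ∈ Set.Icc (0:ℝ) β,
        Filter.Tendsto (fun t => pi a * B (t - a)) Filter.atTop Filter.atTop) ∧
    (r < 1 → ∀ c₂ : ℝ, (∀ s ∈ Set.Icc (0:ℝ) β, B s ≤ c₂) →
      Filter.Tendsto B Filter.atTop (nhds 0) ∧
      ∀ a ∈ Set.Icc (0:ℝ) β,
        Filter.Tendsto (fun t => pi a * B (t - a)) Filter.atTop (nhds 0)) := by
  subst hr
  have hsol : IsRenewalSolution α β bbar B := ⟨hBcont, hB⟩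
  have hb0' : ∀ a ∈ Icc α β, 0 ≤ bbar a := fun a _ => hb0 a
  have hlag (a : ℝ) : Tendsto (fun t => t - a) atTop atTop :=
    tendsto_atTop_add_const_right _ (-a) tendsto_id
  refine ⟨fun hr c₁ hc₁ hinit => ?_, fun hr c₂ hinit => ?_⟩
  · have hBtop := hsol.tendsto_atTop hα hαβ.le hbc.continuousOn hb0' hr hc₁ hinit
    refine ⟨hBtop, fun a _ => (hBtop.comp (hlag a)).const_mul_atTop ?_⟩
    rw [hpi]
    exact exp_pos _
  · have hBzero := hsol.tendsto_zero hα hαβ.le hbc.continuousOn hb0' hr hBnonneg hinit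
    exact ⟨hBzero, fun a _ => by simpa using (hBzero.comp (hlag a)).const_mul (pi a)⟩
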